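/- There exists N₀ ∈ ℕ, depending only on Q, α and θ, such that for every N ≥ N₀ the following are equivalent for every pair (M,A) consisting of a representation M of Q on (V_i) and a family A = (A_i : E_i → V_i)_{i∈Q0⁺}: (i) every one-framed subrepresentation of (M,A) has η⁺-value ≤ 0 ((M,A) is η⁺-semi-stable); (ii) every one-framed subrepresentation of (M,A) other than (0,(0)_i) and (k,(V_i)_i) has η⁺-value < 0 ((M,A) is η⁺-stable); (iii) no subrepresentation U of M with U ≠ (V_i)_i satisfies A_i(E_i) ⊆ U_i for all i ∈ Q0⁺ (equivalently, for every j ∈ Q0 the map ⊕_p E_{s(p)} → V_j, (w_p)_p ↦ Σ_p M_p(A_{s(p)}(w_p)), summing over all paths p with source in Q0⁺ and target j, is surjective). -/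

import Mathlib

/-!
Write `η(L,U) = N·(|α⁺|·dim L − Σ_{i∈Q0⁺} dim U_i) + θ(dim U)`, where the last term is bounded in
absolute value by `B = Σ_i |θ_i| α_i`. Let `Φ(x) = N·Σ_{i∈Q0⁺} x_i − θ(x)`; then `η(0,U) = −Φ(dim U)`
and, since `θ(α) = 0`, `η(k,U) = Φ(α − dim U)`. For `N > B`, `Φ` is positive on every nonzero
`0 ≤ x ≤ α`: either `x` meets `Q0⁺` and the `N`-term beats `B`, or `x` is supported where `θ < 0`.
So the only one-framed subrepresentations with `η ≥ 0` besides `(0,0)` and `(k,V)` are the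
`(k,U)` with `U ≠ V`, and those exist exactly when (iii) fails.
-/

open Module

section

variable {k Q0 Q1 : Type} [Field k] (src tgt : Q1 → Q0)
  (V : Q0 → Type) [∀ i, AddCommGroup (V i)] [∀ i, Module k (V i)]

/-- `U` is a subrepresentation of the representation `M`. -/
def IsSubrep (M : ∀ a : Q1, V (src a) →ₗ[k] V (tgt a))
    (U : ∀ i : Q0, Submodule k (V i)) : Prop :=
  ∀ a : Q1, ∀ x ∈ U (src a), M a x ∈ U (tgt a)

variable [Fintype Q0] (θ : Q0 → ℤ)

/-- The η⁺-value of a one-framed subrepresentation `(L,U)` for the framing parameter `N`: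
`N·|α⁺|·dim L + Σ_{i∈Q0⁺} (θ_i − N)·dim U_i + Σ_{i∉Q0⁺} θ_i·dim U_i`. -/
noncomputable def EtaPlusVal (N : ℕ) (L : Submodule k k)
    (U : ∀ i : Q0, Submodule k (V i)) : ℤ :=
  (N : ℤ) * (∑ i : {i : Q0 // 0 ≤ θ i}, (finrank k (V i.1) : ℤ)) * (finrank k L : ℤ)
    + ∑ i : {i : Q0 // 0 ≤ θ i}, (θ i.1 - (N : ℤ)) * (finrank k (U i.1) : ℤ)
    + ∑ i : {i : Q0 // ¬ 0 ≤ θ i}, θ i.1 * (finrank k (U i.1) : ℤ)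

end

theorem sum_mul_lt_mul_sum_nonneg {ι : Type*} [Fintype ι] {θ a x : ι → ℤ} {N : ℤ}
    (hN : ∑ i, |θ i| * a i < N) (hx₀ : ∀ i, 0 ≤ x i) (hxa : ∀ i, x i ≤ a i)
    (hx : ∃ i, x i ≠ 0) :
    ∑ i, θ i * x i < N * ∑ i : {i // 0 ≤ θ i}, x i := by
  by_cases hpos : ∃ i : {i // 0 ≤ θ i}, x i ≠ 0
  · obtain ⟨i, hi⟩ := hpos
    have hsum : 1 ≤ ∑ i : {i // 0 ≤ θ i}, x i :=
      ((hx₀ i).lt_of_ne' hi).trans_le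
        (Finset.single_le_sum (f := fun j : {i // 0 ≤ θ i} => x j) (fun j _ => hx₀ j)
          (Finset.mem_univ i))
    have hbound : ∑ i, θ i * x i ≤ ∑ i, |θ i| * a i := by
      refine Finset.sum_le_sum fun i _ => (le_abs_self _).trans ?_
      rw [abs_mul, abs_of_nonneg (hx₀ i)]
      exact mul_le_mul_of_nonneg_left (hxa i) (abs_nonneg _)
    have ha : 0 ≤ ∑ i, |θ i| * a i :=
      Finset.sum_nonneg fun i _ => mul_nonneg (abs_nonneg _) ((hx₀ i).trans (hxa i))
    calc ∑ i, θ i * x i < N := hbound.trans_lt hN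
      _ ≤ N * ∑ i : {i // 0 ≤ θ i}, x i := le_mul_of_one_le_right (by linarith) hsum
  · push Not at hpos
    obtain ⟨j, hj⟩ := hx
    have hθj : θ j < 0 := by
      by_contra! h
      exact hj (hpos ⟨j, h⟩)
    rw [Fintype.sum_eq_zero _ hpos, mul_zero, ← neg_pos, ← Finset.sum_neg_distrib]
    refine Finset.sum_pos' (fun i _ => ?_) ⟨j, Finset.mem_univ j, ?_⟩
    · by_cases hθi : 0 ≤ θ i
      · simp [hpos ⟨i, hθi⟩]
      · exact neg_nonneg.mpr (mul_nonpos_of_nonpos_of_nonneg (le_of_not_ge hθi) (hx₀ i))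
    · exact neg_pos.mpr (mul_neg_of_neg_of_pos hθj ((hx₀ j).lt_of_ne' hj))

section

variable {k Q0 Q1 : Type} [Field k] {src tgt : Q1 → Q0}
  {V : Q0 → Type} [∀ i, AddCommGroup (V i)] [∀ i, Module k (V i)]
  [Fintype Q0] (θ : Q0 → ℤ)

theorem etaPlusVal_eq (N : ℕ) (L : Submodule k k) (U : ∀ i : Q0, Submodule k (V i)) :
    EtaPlusVal V θ N L U =
      N * ((∑ i : {i // 0 ≤ θ i}, (finrank k (V i.1) : ℤ)) * finrank k L
        - ∑ i : {i // 0 ≤ θ i}, (finrank k (U i.1) : ℤ))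
      + ∑ i, θ i * (finrank k (U i) : ℤ) := by
  rw [EtaPlusVal,
    ← Fintype.sum_subtype_add_sum_subtype (fun i => 0 ≤ θ i) (fun i => θ i * (finrank k (U i) : ℤ))]
  simp only [sub_mul, Finset.sum_sub_distrib, ← Finset.mul_sum]
  ring

theorem etaPlusVal_bot (N : ℕ) (U : ∀ i : Q0, Submodule k (V i)) :
    EtaPlusVal V θ N ⊥ U =
      ∑ i, θ i * (finrank k (U i) : ℤ) - N * ∑ i : {i // 0 ≤ θ i}, (finrank k (U i.1) : ℤ) := by
  rw [etaPlusVal_eq, finrank_bot]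
  ring

variable {θ}

theorem etaPlusVal_top (hθ : ∑ i, θ i * (finrank k (V i) : ℤ) = 0) (N : ℕ)
    (U : ∀ i : Q0, Submodule k (V i)) :
    EtaPlusVal V θ N ⊤ U =
      N * ∑ i : {i // 0 ≤ θ i}, ((finrank k (V i.1) : ℤ) - finrank k (U i.1))
        - ∑ i, θ i * ((finrank k (V i) : ℤ) - finrank k (U i)) := by
  simp only [etaPlusVal_eq, finrank_top, finrank_self, Nat.cast_one, mul_one, mul_sub,
    Finset.sum_sub_distrib, hθ]
  ring

variable [∀ i, FiniteDimensional k (V i)]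

theorem etaPlusVal_bot_neg {N : ℕ} (hN : ∑ i, |θ i| * (finrank k (V i) : ℤ) < N)
    {U : ∀ i : Q0, Submodule k (V i)} (hU : ¬ ∀ i, U i = ⊥) :
    EtaPlusVal V θ N ⊥ U < 0 := by
  rw [etaPlusVal_bot, sub_neg]
  refine sum_mul_lt_mul_sum_nonneg hN (fun i => by positivity)
    (fun i => by exact_mod_cast Submodule.finrank_le (U i)) ?_
  by_contra! h
  exact hU fun i => Submodule.finrank_eq_zero.mp (by exact_mod_cast h i)

theorem etaPlusVal_top_pos (hθ : ∑ i, θ i * (finrank k (V i) : ℤ) = 0) {N : ℕ}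
    (hN : ∑ i, |θ i| * (finrank k (V i) : ℤ) < N)
    {U : ∀ i : Q0, Submodule k (V i)} (hU : ¬ ∀ i, U i = ⊤) :
    0 < EtaPlusVal V θ N ⊤ U := by
  rw [etaPlusVal_top hθ, sub_pos]
  refine sum_mul_lt_mul_sum_nonneg hN
    (fun i => sub_nonneg.mpr (by exact_mod_cast Submodule.finrank_le (U i)))
    (fun i => sub_le_self _ (by positivity)) ?_
  by_contra! h
  exact hU fun i => Submodule.eq_top_of_finrank_eq (by have := h i; omega)

end

section

variable {k Q0 Q1 : Type} [Field k] {src tgt : Q1 → Q0}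
  {V : Q0 → Type} [∀ i, AddCommGroup (V i)] [∀ i, Module k (V i)] [Fintype Q0]
  (θ : Q0 → ℤ) {E : {i : Q0 // 0 ≤ θ i} → Type} [∀ i, AddCommGroup (E i)] [∀ i, Module k (E i)]
  (N : ℕ) (M : ∀ a : Q1, V (src a) →ₗ[k] V (tgt a)) (A : ∀ i, E i →ₗ[k] V i.1)

def IsEtaPlusSemistable : Prop :=
  ∀ (L : Submodule k k) (U : ∀ i : Q0, Submodule k (V i)), IsSubrep src tgt V M U →
    (L = ⊤ → ∀ i, LinearMap.range (A i) ≤ U i.1) → EtaPlusVal V θ N L U ≤ 0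

def IsEtaPlusStable : Prop :=
  ∀ (L : Submodule k k) (U : ∀ i : Q0, Submodule k (V i)), IsSubrep src tgt V M U →
    (L = ⊤ → ∀ i, LinearMap.range (A i) ≤ U i.1) →
    ¬(L = ⊥ ∧ ∀ i, U i = ⊥) → ¬(L = ⊤ ∧ ∀ i, U i = ⊤) → EtaPlusVal V θ N L U < 0

def FramingGenerates : Prop :=
  ¬ ∃ U : ∀ i : Q0, Submodule k (V i),
    IsSubrep src tgt V M U ∧ (¬ ∀ i, U i = ⊤) ∧ ∀ i, LinearMap.range (A i) ≤ U i.1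

variable {θ N M A}

theorem IsEtaPlusStable.isEtaPlusSemistable (hθ : ∑ i, θ i * (finrank k (V i) : ℤ) = 0)
    (h : IsEtaPlusStable θ N M A) : IsEtaPlusSemistable θ N M A := by
  intro L U hU hA
  by_cases hbot : L = ⊥ ∧ ∀ i, U i = ⊥
  · obtain ⟨rfl, hU₀⟩ := hbot
    obtain rfl : U = fun _ => ⊥ := funext hU₀
    simp [etaPlusVal_bot]
  by_cases htop : L = ⊤ ∧ ∀ i, U i = ⊤
  · obtain ⟨rfl, hU₁⟩ := htop
    obtain rfl : U = fun _ => ⊤ := funext hU₁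
    simp [etaPlusVal_top hθ]
  exact (h L U hU hA hbot htop).le

variable [∀ i, FiniteDimensional k (V i)]

theorem IsEtaPlusSemistable.framingGenerates (hθ : ∑ i, θ i * (finrank k (V i) : ℤ) = 0)
    (hN : ∑ i, |θ i| * (finrank k (V i) : ℤ) < N) (h : IsEtaPlusSemistable θ N M A) :
    FramingGenerates θ M A := by
  rintro ⟨U, hU, hne, hA⟩
  exact (h ⊤ U hU fun _ => hA).not_gt (etaPlusVal_top_pos hθ hN hne)

theorem FramingGenerates.isEtaPlusStable (hN : ∑ i, |θ i| * (finrank k (V i) : ℤ) < N)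
    (h : FramingGenerates θ M A) : IsEtaPlusStable θ N M A := by
  intro L U hU hA hbot htop
  rcases eq_bot_or_eq_top L with rfl | rfl
  · exact etaPlusVal_bot_neg hN fun hU₀ => hbot ⟨rfl, hU₀⟩
  · exact absurd ⟨rfl, not_not.mp fun hne => h ⟨U, hU, hne, hA rfl⟩⟩ htop

end

theorem statement10_general {k Q0 Q1 : Type} [Field k] [Fintype Q0]
    (src tgt : Q1 → Q0)
    (V : Q0 → Type) [∀ i, AddCommGroup (V i)] [∀ i, Module k (V i)]
    [∀ i, FiniteDimensional k (V i)]
    (θ : Q0 → ℤ)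
    (hθ : ∑ i : Q0, θ i * (finrank k (V i) : ℤ) = 0)
    (E : {i : Q0 // 0 ≤ θ i} → Type) [∀ i, AddCommGroup (E i)] [∀ i, Module k (E i)] :
    ∃ N₀ : ℕ, ∀ N : ℕ, N₀ ≤ N →
      ∀ (M : ∀ a : Q1, V (src a) →ₗ[k] V (tgt a))
        (A : ∀ i : {i : Q0 // 0 ≤ θ i}, E i →ₗ[k] V i.1),
        ((∀ (L : Submodule k k) (U : ∀ i : Q0, Submodule k (V i)),
            IsSubrep src tgt V M U →
            (L = ⊤ → ∀ i : {i : Q0 // 0 ≤ θ i}, LinearMap.range (A i) ≤ U i.1) →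
            EtaPlusVal V θ N L U ≤ 0)
          ↔
          (∀ (L : Submodule k k) (U : ∀ i : Q0, Submodule k (V i)),
            IsSubrep src tgt V M U →
            (L = ⊤ → ∀ i : {i : Q0 // 0 ≤ θ i}, LinearMap.range (A i) ≤ U i.1) →
            ¬(L = ⊥ ∧ ∀ i, U i = ⊥) → ¬(L = ⊤ ∧ ∀ i, U i = ⊤) →
            EtaPlusVal V θ N L U < 0))
        ∧
        ((∀ (L : Submodule k k) (U : ∀ i : Q0, Submodule k (V i)),
            IsSubrep src tgt V M U →
            (L = ⊤ → ∀ i : {i : Q0 // 0 ≤ θ i}, LinearMap.range (A i) ≤ U i.1) →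
            ¬(L = ⊥ ∧ ∀ i, U i = ⊥) → ¬(L = ⊤ ∧ ∀ i, U i = ⊤) →
            EtaPlusVal V θ N L U < 0)
          ↔
          (¬ ∃ U : ∀ i : Q0, Submodule k (V i),
            IsSubrep src tgt V M U ∧ (¬ ∀ i, U i = ⊤) ∧
            (∀ i : {i : Q0 // 0 ≤ θ i}, LinearMap.range (A i) ≤ U i.1))) := by
  refine ⟨(∑ i, |θ i| * (finrank k (V i) : ℤ)).toNat + 1, fun N hN M A => ?_⟩
  have hB : ∑ i, |θ i| * (finrank k (V i) : ℤ) < N := by omega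
  have semistable_framing := IsEtaPlusSemistable.framingGenerates (M := M) (A := A) hθ hB
  have framing_stable := FramingGenerates.isEtaPlusStable (M := M) (A := A) hB
  have stable_semistable := IsEtaPlusStable.isEtaPlusSemistable (M := M) (A := A) (N := N) hθ
  exact ⟨⟨fun h => framing_stable (semistable_framing h), stable_semistable⟩,
    ⟨fun h => semistable_framing (stable_semistable h), framing_stable⟩⟩

/-- For `N ≫ 0` the following are equivalent: (i) `(M,A)` is η⁺-semi-stable, (ii) `(M,A)`
is η⁺-stable, (iii) no subrepresentation `U ≠ (V_i)_i` of `M` contains all the images of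
the maps `A_i`, `i ∈ Q0⁺`. -/
theorem statement10 {k Q0 Q1 : Type} [Field k] [Fintype Q0] [Fintype Q1]
    (src tgt : Q1 → Q0)
    (V : Q0 → Type) [∀ i, AddCommGroup (V i)] [∀ i, Module k (V i)]
    [∀ i, FiniteDimensional k (V i)]
    (θ : Q0 → ℤ)
    (hθ : ∑ i : Q0, θ i * (finrank k (V i) : ℤ) = 0)
    (E : {i : Q0 // 0 ≤ θ i} → Type) [∀ i, AddCommGroup (E i)] [∀ i, Module k (E i)]
    [∀ i, FiniteDimensional k (E i)]
    (hE : ∀ i : {i : Q0 // 0 ≤ θ i}, finrank k (E i) = finrank k (V i.1)) :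
    ∃ N₀ : ℕ, ∀ N : ℕ, N₀ ≤ N →
      ∀ (M : ∀ a : Q1, V (src a) →ₗ[k] V (tgt a))
        (A : ∀ i : {i : Q0 // 0 ≤ θ i}, E i →ₗ[k] V i.1),
        ((∀ (L : Submodule k k) (U : ∀ i : Q0, Submodule k (V i)),
            IsSubrep src tgt V M U →
            (L = ⊤ → ∀ i : {i : Q0 // 0 ≤ θ i}, LinearMap.range (A i) ≤ U i.1) →
            EtaPlusVal V θ N L U ≤ 0)
          ↔
          (∀ (L : Submodule k k) (U : ∀ i : Q0, Submodule k (V i)),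
            IsSubrep src tgt V M U →
            (L = ⊤ → ∀ i : {i : Q0 // 0 ≤ θ i}, LinearMap.range (A i) ≤ U i.1) →
            ¬(L = ⊥ ∧ ∀ i, U i = ⊥) → ¬(L = ⊤ ∧ ∀ i, U i = ⊤) →
            EtaPlusVal V θ N L U < 0))
        ∧
        ((∀ (L : Submodule k k) (U : ∀ i : Q0, Submodule k (V i)),
            IsSubrep src tgt V M U →
            (L = ⊤ → ∀ i : {i : Q0 // 0 ≤ θ i}, LinearMap.range (A i) ≤ U i.1) →
            ¬(L = ⊥ ∧ ∀ i, U i = ⊥) → ¬(L = ⊤ ∧ ∀ i, U i = ⊤) →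
            EtaPlusVal V θ N L U < 0)
          ↔
          (¬ ∃ U : ∀ i : Q0, Submodule k (V i),
            IsSubrep src tgt V M U ∧ (¬ ∀ i, U i = ⊤) ∧
            (∀ i : {i : Q0 // 0 ≤ θ i}, LinearMap.range (A i) ≤ U i.1))) :=
  statement10_general src tgt V θ hθ E
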